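/- arXiv:1204.5058 — 4 statements merged into one kernel-verified Lean document; each statement's English description precedes it below -/
import Mathlib

section
/- Let f : ℝ → ℂ be differentiable and integrable on ℝ with f vanishing at ±∞ (i.e., f(t) → 0 as t → ±∞). Then for every x ∈ ℂ \ ℝ, the derivative of the Cauchy transform satisfies C(f)'(x) = C(f')(x), i.e., d/dx ∫ f(t)/(t−x) dt = ∫ f'(t)/(t−x) dt. -/
/-!
Both sides equal `∫ f t / (t - x) ^ 2`. For the Cauchy transform this is differentiation under
the integral sign: for `z` within `|Im x| / 2` of `x` the `z`-derivative of the integrand is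
dominated by `‖f t‖ / (|Im x| / 2) ^ 2`. For `∫ f' t / (t - x)` it is integration by parts; the
boundary terms vanish because an integrable function with integrable derivative tends to `0`
at `±∞`.
-/

open MeasureTheory Filter Metric

noncomputable def cauchyTransform (μ : Measure ℝ) (f : ℝ → ℂ) (z : ℂ) : ℂ :=
  ∫ t, f t / ((t : ℂ) - z) ∂μ

lemma abs_im_le_norm_ofReal_sub (t : ℝ) (z : ℂ) : |z.im| ≤ ‖(t : ℂ) - z‖ := by
  simpa using Complex.abs_im_le_norm ((t : ℂ) - z)

lemma ofReal_sub_ne_zero {z : ℂ} (hz : z.im ≠ 0) (t : ℝ) : (t : ℂ) - z ≠ 0 := by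
  intro h
  apply hz
  simpa using congrArg Complex.im h

lemma norm_div_ofReal_sub_pow_le {r : ℝ} {z : ℂ} (hr : 0 < r) (hrz : r ≤ |z.im|)
    (w : ℂ) (t : ℝ) (n : ℕ) : ‖w / ((t : ℂ) - z) ^ n‖ ≤ ‖w‖ / r ^ n := by
  rw [norm_div, norm_pow]
  gcongr
  exact hrz.trans (abs_im_le_norm_ofReal_sub t z)

lemma aestronglyMeasurable_div_ofReal_sub_pow {μ : Measure ℝ} {g : ℝ → ℂ}
    (hg : AEStronglyMeasurable g μ) (z : ℂ) (n : ℕ) :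
    AEStronglyMeasurable (fun t => g t / ((t : ℂ) - z) ^ n) μ :=
  hg.mul (Measurable.aestronglyMeasurable (by fun_prop))

lemma integrable_div_ofReal_sub_pow {μ : Measure ℝ} {g : ℝ → ℂ} (hg : Integrable g μ)
    {z : ℂ} (hz : z.im ≠ 0) (n : ℕ) :
    Integrable (fun t => g t / ((t : ℂ) - z) ^ n) μ :=
  (hg.norm.div_const (|z.im| ^ n)).mono' (aestronglyMeasurable_div_ofReal_sub_pow hg.1 z n)
    (.of_forall fun t => norm_div_ofReal_sub_pow_le (abs_pos.2 hz) le_rfl _ t n)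

lemma hasDerivAt_div_ofReal_sub {f f' : ℝ → ℂ} {t : ℝ} (hf : HasDerivAt f (f' t) t)
    {z : ℂ} (hz : z.im ≠ 0) :
    HasDerivAt (fun s : ℝ => f s / ((s : ℂ) - z))
      (f' t / ((t : ℂ) - z) - f t / ((t : ℂ) - z) ^ 2) t := by
  have hsub : HasDerivAt (fun s : ℝ => (s : ℂ) - z) 1 t := by
    simpa using (hasDerivAt_id t).ofReal_comp.sub_const z
  have hquot : HasDerivAt (fun s : ℝ => f s / ((s : ℂ) - z))
      ((f' t * ((t : ℂ) - z) - f t * 1) / ((t : ℂ) - z) ^ 2) t :=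
    hf.div hsub (ofReal_sub_ne_zero hz t)
  convert hquot using 1
  field_simp [ofReal_sub_ne_zero hz t]

lemma hasDerivAt_const_div_sub (c a : ℂ) {z : ℂ} (hz : a - z ≠ 0) :
    HasDerivAt (fun w => c / (a - w)) (c / (a - z) ^ 2) z := by
  have hsub : HasDerivAt (fun w : ℂ => a - w) (-1) z := by
    simpa using (hasDerivAt_id z).const_sub a
  have hquot : HasDerivAt (fun w => c / (a - w)) ((0 * (a - z) - c * (-1)) / (a - z) ^ 2) z :=
    (hasDerivAt_const z c).div hsub hz
  simpa using hquot

lemma integral_deriv_div_ofReal_sub {f f' : ℝ → ℂ} (hderiv : ∀ t, HasDerivAt f (f' t) t)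
    (hf : Integrable f) (hf' : Integrable f') {z : ℂ} (hz : z.im ≠ 0) :
    ∫ t, f' t / ((t : ℂ) - z) = ∫ t, f t / ((t : ℂ) - z) ^ 2 := by
  have hf'_div : Integrable fun t => f' t / ((t : ℂ) - z) := by
    simpa using integrable_div_ofReal_sub_pow hf' hz 1
  have hf_div : Integrable fun t => f t / ((t : ℂ) - z) := by
    simpa using integrable_div_ofReal_sub_pow hf hz 1
  have hf_div_sq := integrable_div_ofReal_sub_pow hf hz 2
  have hzero := integral_eq_zero_of_hasDerivAt_of_integrable
    (fun t => hasDerivAt_div_ofReal_sub (hderiv t) hz) (hf'_div.sub hf_div_sq) hf_div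
  rwa [integral_sub hf'_div hf_div_sq, sub_eq_zero] at hzero

lemma half_abs_im_le_abs_im_of_mem_ball {x z : ℂ} (hz : z ∈ ball x (|x.im| / 2)) :
    |x.im| / 2 ≤ |z.im| := by
  have hxz : |x.im - z.im| < |x.im| / 2 := by
    rw [mem_ball, dist_comm, dist_eq_norm] at hz
    exact lt_of_le_of_lt (by simpa using Complex.abs_im_le_norm (x - z)) hz
  linarith [abs_sub_abs_le_abs_sub x.im z.im]

lemma hasDerivAt_cauchyTransform {μ : Measure ℝ} {f : ℝ → ℂ} (hf : Integrable f μ)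
    {x : ℂ} (hx : x.im ≠ 0) :
    HasDerivAt (cauchyTransform μ f) (∫ t, f t / ((t : ℂ) - x) ^ 2 ∂μ) x := by
  set r := |x.im| / 2
  have hr : 0 < r := by positivity
  have hball_im : ∀ z ∈ ball x r, z.im ≠ 0 := fun z hz =>
    abs_pos.1 (hr.trans_le (half_abs_im_le_abs_im_of_mem_ball hz))
  have hderiv : ∀ t : ℝ, ∀ z ∈ ball x r,
      HasDerivAt (fun w => f t / ((t : ℂ) - w)) (f t / ((t : ℂ) - z) ^ 2) z :=
    fun t z hz => hasDerivAt_const_div_sub (f t) t (ofReal_sub_ne_zero (hball_im z hz) t)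
  refine (hasDerivAt_integral_of_dominated_loc_of_deriv_le (ball_mem_nhds x hr)
    (.of_forall fun z => by simpa using aestronglyMeasurable_div_ofReal_sub_pow hf.1 z 1)
    (by simpa using integrable_div_ofReal_sub_pow hf hx 1)
    (aestronglyMeasurable_div_ofReal_sub_pow hf.1 x 2)
    (.of_forall fun t z hz =>
      norm_div_ofReal_sub_pow_le hr (half_abs_im_le_abs_im_of_mem_ball hz) (f t) t 2)
    (hf.norm.div_const (r ^ 2)) (.of_forall hderiv)).2

theorem cauchy_transform_deriv_general (f f' : ℝ → ℂ)
    (hderiv : ∀ t : ℝ, HasDerivAt f (f' t) t)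
    (hint : Integrable f)
    (hint' : Integrable f')
    (x : ℂ) (hx : x.im ≠ 0) :
    HasDerivAt (fun z : ℂ => ∫ t : ℝ, f t / ((t : ℂ) - z))
      (∫ t : ℝ, f' t / ((t : ℂ) - x)) x := by
  rw [integral_deriv_div_ofReal_sub hderiv hint hint' hx]
  exact hasDerivAt_cauchyTransform hint hx

/-- For a differentiable, integrable `f : ℝ → ℂ` vanishing at `±∞`,
the derivative of the Cauchy transform satisfies `C(f)'(x) = C(f')(x)` for `x` off ℝ. -/
theorem cauchy_transform_deriv (f f' : ℝ → ℂ)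
    (hderiv : ∀ t : ℝ, HasDerivAt f (f' t) t)
    (hint : Integrable f)
    (hint' : Integrable f')
    (htop : Tendsto f atTop (nhds 0))
    (hbot : Tendsto f atBot (nhds 0))
    (x : ℂ) (hx : x.im ≠ 0) :
    HasDerivAt (fun z : ℂ => ∫ t : ℝ, f t / ((t : ℂ) - z))
      (∫ t : ℝ, f' t / ((t : ℂ) - x)) x :=
  cauchy_transform_deriv_general f f' hderiv hint hint' x hx
end

section
/- Define the multiple Hermite polynomials H_{n,m} as the monic polynomials of degree n+m satisfying ∫_{−∞}^∞ x^k H_{n,m}(x) e^{−x²+c₁x} dx = 0 for k = 0,…,n−1 and ∫_{−∞}^∞ x^k H_{n,m}(x) e^{−x²+c₂x} dx = 0 for k = 0,…,m−1, with c₁ ≠ c₂. Then the raising relation (e^{−x²+c₁x} H_{n−1,m}(x))' = −2 e^{−x²+c₁x} H_{n,m}(x) holds, i.e., H_{n−1,m}'(x) = −2H_{n,m}(x) + (2x − c₁)H_{n−1,m}(x). -/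
/-!
Completing the square, `∫ P(x) e^{-x² + cx} dx = e^{c²/4} (T P)(c/2)` with
`(T P)(t) = ∫ P(y + t) e^{-y²} dy`. This `T` maps polynomials to polynomials, preserves
degree and is injective, commutes with `d/dx`, and integration by parts gives
`T (X P) = X T P + (T P')/2`. Hence the moments `k < K` of `P` against `e^{-x² + cx}` vanish
iff `T P` has a root of order `K` at `c/2`; so a polynomial of degree `< p + q` with `p`
vanishing moments for `c₁` and `q` for `c₂ ≠ c₁` is zero: this is the normality of `(p, q)`.

Integration by parts also shows that replacing `P` by `e^{x² - c₁x} (e^{-x² + c₁x} P)'` keeps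
the vanishing moments against `e^{-x² + c₂x}` and adds one against `e^{-x² + c₁x}`. Thus
`H_{n+1,m} + ½ e^{x² - c₁x} (e^{-x² + c₁x} H_{n,m})'`, whose leading terms cancel, has degree
`< n + m + 1` and `n + 1`, resp. `m`, vanishing moments, so it is zero.
-/

open MeasureTheory

namespace MultipleHermite

open Polynomial Real Finset

theorem integrable_pow_mul_exp_neg_sq (i : ℕ) :
    Integrable fun x : ℝ => x ^ i * exp (-x ^ 2) := by
  simpa [rpow_natCast] using
    integrable_rpow_mul_exp_neg_mul_sq one_pos (neg_one_lt_zero.trans_le (Nat.cast_nonneg i))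

theorem integrable_eval_mul_exp_neg_sq (P : ℝ[X]) :
    Integrable fun x : ℝ => P.eval x * exp (-x ^ 2) := by
  simp_rw [eval_eq_sum_range, sum_mul, mul_assoc]
  exact integrable_finsetSum _ fun i _ => (integrable_pow_mul_exp_neg_sq i).const_mul _

theorem integral_derivative_sub_mul_eval_mul_exp_neg_sq (P : ℝ[X]) :
    ∫ x : ℝ, ((derivative P).eval x - 2 * x * P.eval x) * exp (-x ^ 2) = 0 := by
  refine integral_eq_zero_of_hasDerivAt_of_integrable (f := fun x => P.eval x * exp (-x ^ 2))
    (fun x => ?_) ?_ (integrable_eval_mul_exp_neg_sq P)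
  · refine ((P.hasDerivAt x).fun_mul (hasDerivAt_pow 2 x).fun_neg.exp).congr_deriv ?_
    simp only [Nat.cast_ofNat, Nat.add_one_sub_one, pow_one]
    ring
  · convert integrable_eval_mul_exp_neg_sq (derivative P - C 2 * X * P) using 2 with x
    simp

theorem sum_range_smul_hasseDeriv_of_natDegree_lt {R : Type*} [Semiring R] (a : ℕ → R)
    {P : R[X]} {N : ℕ} (hN : P.natDegree < N) :
    ∑ i ∈ range N, a i • hasseDeriv i P
      = ∑ i ∈ range (P.natDegree + 1), a i • hasseDeriv i P := by
  refine (sum_subset (range_subset_range.2 hN) fun i _ hi => ?_).symm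
  rw [hasseDeriv_eq_zero_of_lt_natDegree _ _ (by simp at hi; omega), smul_zero]

noncomputable def gaussMoment (i : ℕ) : ℝ := ∫ y : ℝ, y ^ i * exp (-y ^ 2)

/-- The polynomial `t ↦ ∫ P(y + t) e^{-y²} dy` (see `eval_gaussTransform`): Taylor-expanding
`P(y + t)` in `y` gives `∑ᵢ gaussMoment i • hasseDeriv i P`. -/
noncomputable def gaussTransform : ℝ[X] →ₗ[ℝ] ℝ[X] where
  toFun P := ∑ i ∈ range (P.natDegree + 1), gaussMoment i • hasseDeriv i P
  map_add' P Q := by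
    have hlt {S : ℝ[X]} (h : S.natDegree ≤ max P.natDegree Q.natDegree) :
        S.natDegree < max P.natDegree Q.natDegree + 1 := Nat.lt_succ_of_le h
    rw [← sum_range_smul_hasseDeriv_of_natDegree_lt _ (hlt (natDegree_add_le P Q)),
      ← sum_range_smul_hasseDeriv_of_natDegree_lt _ (hlt (le_max_left _ _)),
      ← sum_range_smul_hasseDeriv_of_natDegree_lt _ (hlt (le_max_right _ _)), ← sum_add_distrib]
    simp only [map_add, smul_add]
  map_smul' a P := by
    rw [← sum_range_smul_hasseDeriv_of_natDegree_lt _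
      ((natDegree_smul_le a P).trans_lt P.natDegree.lt_succ_self), RingHom.id_apply, smul_sum]
    simp only [map_smul, smul_comm a]

theorem gaussTransform_apply_of_natDegree_lt {P : ℝ[X]} {N : ℕ} (hN : P.natDegree < N) :
    gaussTransform P = ∑ i ∈ range N, gaussMoment i • hasseDeriv i P :=
  (sum_range_smul_hasseDeriv_of_natDegree_lt _ hN).symm

theorem eval_gaussTransform (P : ℝ[X]) (t : ℝ) :
    (gaussTransform P).eval t = ∫ y : ℝ, P.eval (y + t) * exp (-y ^ 2) := by
  have htaylor (y : ℝ) : P.eval (y + t) * exp (-y ^ 2) =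
      ∑ i ∈ range (P.natDegree + 1), (hasseDeriv i P).eval t * (y ^ i * exp (-y ^ 2)) := by
    rw [← taylor_eval,
      eval_eq_sum_range' (by rw [natDegree_taylor]; exact P.natDegree.lt_succ_self), sum_mul]
    simp only [taylor_coeff, mul_assoc]
  simp_rw [htaylor]
  rw [integral_finsetSum _ fun i _ => (integrable_pow_mul_exp_neg_sq i).const_mul _]
  simp only [integral_const_mul, gaussTransform, LinearMap.coe_mk, AddHom.coe_mk, eval_finsetSum,
    eval_smul, smul_eq_mul, gaussMoment]
  exact sum_congr rfl fun i _ => mul_comm _ _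

theorem gaussTransform_X_mul (P : ℝ[X]) :
    gaussTransform (X * P) = X * gaussTransform P + C 2⁻¹ * gaussTransform (derivative P) := by
  refine Polynomial.funext fun t => ?_
  set Q := P.comp (X + C t)
  have hparts : (gaussTransform (X * P - t • P - (2⁻¹ : ℝ) • derivative P)).eval t = 0 :=
    calc (gaussTransform (X * P - t • P - (2⁻¹ : ℝ) • derivative P)).eval t
        = ∫ y : ℝ, -2⁻¹ * (((derivative Q).eval y - 2 * y * Q.eval y) * exp (-y ^ 2)) := by
          rw [eval_gaussTransform]
          refine integral_congr_ae (Filter.Eventually.of_forall fun y => ?_)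
          simp only [eval_sub, eval_mul, eval_X, eval_smul, smul_eq_mul, derivative_comp,
            derivative_add, derivative_X, derivative_C, add_zero, one_mul, eval_comp, eval_add,
            eval_C, Q]
          ring
      _ = 0 := by rw [integral_const_mul, integral_derivative_sub_mul_eval_mul_exp_neg_sq, mul_zero]
  simp only [map_sub, map_smul, eval_sub, eval_smul, smul_eq_mul] at hparts
  simp only [eval_add, eval_mul, eval_X, eval_C]
  linarith

theorem gaussTransform_derivative (P : ℝ[X]) :
    gaussTransform (derivative P) = derivative (gaussTransform P) := by
  have hcomm (i : ℕ) : hasseDeriv i (derivative P) = derivative (hasseDeriv i P) := by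
    rw [← hasseDeriv_one', ← hasseDeriv_one', ← LinearMap.comp_apply,
      ← LinearMap.comp_apply, hasseDeriv_comp, hasseDeriv_comp, add_comm 1 i,
      Nat.choose_succ_self_right, Nat.choose_one_right]
  rw [gaussTransform_apply_of_natDegree_lt
      ((natDegree_derivative_le P).trans_lt (Nat.sub_lt_succ _ _)),
    gaussTransform_apply_of_natDegree_lt P.natDegree.lt_succ_self, map_sum]
  simp only [hcomm, map_smul]

theorem natDegree_gaussTransform_le (P : ℝ[X]) :
    (gaussTransform P).natDegree ≤ P.natDegree := by
  rw [gaussTransform_apply_of_natDegree_lt P.natDegree.lt_succ_self]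
  exact natDegree_sum_le_of_forall_le _ _ fun i _ =>
    (natDegree_smul_le _ _).trans ((natDegree_hasseDeriv_le P i).trans (Nat.sub_le _ _))

theorem coeff_gaussTransform_natDegree (P : ℝ[X]) :
    (gaussTransform P).coeff P.natDegree = √π * P.leadingCoeff := by
  have hmoment : gaussMoment 0 = √π := by simpa [gaussMoment] using integral_gaussian 1
  rw [gaussTransform_apply_of_natDegree_lt P.natDegree.lt_succ_self, finsetSum_coeff,
    sum_eq_single 0 (fun i _ hi => ?_) (by simp)]
  · rw [coeff_smul, hasseDeriv_zero', hmoment, smul_eq_mul, leadingCoeff]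
  · rw [coeff_smul, hasseDeriv_coeff, P.coeff_eq_zero_of_natDegree_lt (by omega), mul_zero,
      smul_zero]

theorem gaussTransform_eq_zero_iff {P : ℝ[X]} : gaussTransform P = 0 ↔ P = 0 := by
  refine ⟨fun h => ?_, fun h => by rw [h, map_zero]⟩
  have := coeff_gaussTransform_natDegree P
  rw [h, coeff_zero, eq_comm, mul_eq_zero] at this
  exact leadingCoeff_eq_zero.1 (this.resolve_left (by positivity))

theorem integral_eval_mul_exp_neg_sq_add_mul (P : ℝ[X]) (c : ℝ) :
    ∫ x : ℝ, P.eval x * exp (-x ^ 2 + c * x)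
      = exp (c ^ 2 / 4) * (gaussTransform P).eval (c / 2) := by
  have hsquare (x : ℝ) : P.eval x * exp (-x ^ 2 + c * x)
      = exp (c ^ 2 / 4) * (P.eval (x - c / 2 + c / 2) * exp (-(x - c / 2) ^ 2)) := by
    rw [sub_add_cancel, mul_left_comm, ← exp_add]
    ring_nf
  simp_rw [hsquare]
  rw [integral_const_mul, integral_sub_right_eq_self (fun y => P.eval (y + c / 2) * exp (-y ^ 2)),
    eval_gaussTransform]

/-- `weightedDerivative c P = e^{x² - cx} (e^{-x² + cx} P)'`. -/
noncomputable def weightedDerivative (c : ℝ) (P : ℝ[X]) : ℝ[X] :=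
  derivative P + (C c - C 2 * X) * P

theorem eval_gaussTransform_weightedDerivative (c : ℝ) (P : ℝ[X]) :
    (gaussTransform (weightedDerivative c P)).eval (c / 2) = 0 := by
  rw [weightedDerivative, sub_mul, mul_assoc, ← smul_eq_C_mul, ← smul_eq_C_mul]
  simp only [map_add, map_sub, map_smul, gaussTransform_X_mul, eval_add, eval_sub, eval_smul,
    eval_mul, eval_X, eval_C, smul_eq_mul]
  ring

theorem eval_gaussTransform_X_pow_mul_weightedDerivative (c : ℝ) (P : ℝ[X]) (k : ℕ) :
    (gaussTransform (X ^ k * weightedDerivative c P)).eval (c / 2)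
      = -k * (gaussTransform (X ^ (k - 1) * P)).eval (c / 2) := by
  have hleibniz : X ^ k * weightedDerivative c P
      = weightedDerivative c (X ^ k * P) - (k : ℝ) • (X ^ (k - 1) * P) := by
    rw [weightedDerivative, weightedDerivative, derivative_mul, derivative_X_pow, smul_eq_C_mul]
    ring
  rw [hleibniz, map_sub, map_smul, eval_sub, eval_gaussTransform_weightedDerivative, eval_smul,
    smul_eq_mul]
  ring

theorem natDegree_add_smul_weightedDerivative_lt {P Q : ℝ[X]} {N : ℕ}
    (hP : IsMonicOfDegree P (N + 1)) (hQ : IsMonicOfDegree Q N) (c : ℝ) :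
    (P + (2⁻¹ : ℝ) • weightedDerivative c Q).natDegree < N + 1 := by
  have hlead : (P - X * Q).natDegree < N + 1 :=
    hP.natDegree_sub_lt N.succ_ne_zero (by simpa [add_comm] using (isMonicOfDegree_X ℝ).mul hQ)
  have hrest : ((2⁻¹ : ℝ) • (derivative Q + C c * Q)).natDegree < N + 1 := by
    refine Nat.lt_succ_of_le ((natDegree_smul_le _ _).trans
      ((natDegree_add_le _ _).trans (max_le ?_ ?_)))
    · exact (natDegree_derivative_le Q).trans (hQ.natDegree_eq ▸ Nat.sub_le _ _)
    · exact (natDegree_C_mul_le _ _).trans hQ.natDegree_eq.le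
  have hsplit : P + (2⁻¹ : ℝ) • weightedDerivative c Q
      = (P - X * Q) + (2⁻¹ : ℝ) • (derivative Q + C c * Q) := by
    have : C (2⁻¹ : ℝ) * C 2 = 1 := by rw [← C_mul]; norm_num
    rw [weightedDerivative, smul_eq_C_mul, smul_eq_C_mul]
    linear_combination (-(X * Q)) * this
  rw [hsplit]
  exact (natDegree_add_le _ _).trans_lt (max_lt hlead hrest)

theorem pow_succ_dvd_of_isRoot_of_pow_dvd_derivative {R : Type*} [CommRing R] [IsDomain R]
    [CharZero R] {Q : R[X]} {t : R} {n : ℕ} (hroot : Q.IsRoot t)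
    (hdvd : (X - C t) ^ n ∣ derivative Q) : (X - C t) ^ (n + 1) ∣ Q := by
  rcases eq_or_ne Q 0 with rfl | hQ
  · exact dvd_zero _
  have hQ' : derivative Q ≠ 0 := fun h => by
    rw [eq_C_of_derivative_eq_zero h, IsRoot, eval_C] at hroot
    exact hQ (by rw [eq_C_of_derivative_eq_zero h, hroot, C_0])
  have hmult := (le_rootMultiplicity_iff hQ').2 hdvd
  rw [derivative_rootMultiplicity_of_root hroot] at hmult
  have hpos := (rootMultiplicity_pos hQ).2 hroot
  exact (le_rootMultiplicity_iff hQ).1 (by omega)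

theorem pow_dvd_gaussTransform_of_eval_eq_zero {P : ℝ[X]} {t : ℝ} {K : ℕ}
    (h : ∀ k < K, (gaussTransform (X ^ k * P)).eval t = 0) :
    (X - C t) ^ K ∣ gaussTransform P := by
  induction K generalizing P with
  | zero => exact one_dvd _
  | succ K ih =>
    have hP := ih fun k hk => h k (by omega)
    have hXP := ih (P := X * P) fun k hk => by
      rw [← mul_assoc, ← pow_succ]
      exact h (k + 1) (by omega)
    refine pow_succ_dvd_of_isRoot_of_pow_dvd_derivative (by simpa using h 0 K.succ_pos) ?_
    have hderiv : derivative (gaussTransform P)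
        = C 2 * (gaussTransform (X * P) - X * gaussTransform P) := by
      rw [gaussTransform_X_mul, ← gaussTransform_derivative, add_sub_cancel_left, ← mul_assoc,
        ← C_mul]
      norm_num
    rw [hderiv]
    exact (dvd_sub hXP (hP.mul_left X)).mul_left _

def MomentsVanish (c : ℝ) (K : ℕ) (P : ℝ[X]) : Prop :=
  ∀ k < K, ∫ x : ℝ, x ^ k * P.eval x * exp (-x ^ 2 + c * x) = 0

theorem momentsVanish_iff {c : ℝ} {K : ℕ} {P : ℝ[X]} :
    MomentsVanish c K P ↔ ∀ k < K, (gaussTransform (X ^ k * P)).eval (c / 2) = 0 := by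
  refine forall₂_congr fun k _ => ?_
  have := integral_eval_mul_exp_neg_sq_add_mul (X ^ k * P) c
  simp only [eval_mul, eval_pow, eval_X] at this
  rw [this, mul_eq_zero, or_iff_right (exp_ne_zero _)]

namespace MomentsVanish

variable {c d : ℝ} {K : ℕ} {P Q : ℝ[X]}

theorem mono (hP : MomentsVanish c K P) {L : ℕ} (hLK : L ≤ K) : MomentsVanish c L P :=
  fun k hk => hP k (hk.trans_le hLK)

theorem add (hP : MomentsVanish c K P) (hQ : MomentsVanish c K Q) :
    MomentsVanish c K (P + Q) := by
  rw [momentsVanish_iff] at *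
  intro k hk
  rw [mul_add, map_add, eval_add, hP k hk, hQ k hk, add_zero]

theorem smul (hP : MomentsVanish c K P) (a : ℝ) : MomentsVanish c K (a • P) := by
  rw [momentsVanish_iff] at *
  intro k hk
  rw [mul_smul_comm, map_smul, eval_smul, hP k hk, smul_zero]

theorem weightedDerivative_self (hP : MomentsVanish c K P) :
    MomentsVanish c (K + 1) (weightedDerivative c P) := by
  rw [momentsVanish_iff] at *
  intro k hk
  rw [eval_gaussTransform_X_pow_mul_weightedDerivative]
  rcases k with _ | k
  · simp
  · rw [Nat.add_sub_cancel, hP k (by omega), mul_zero]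

theorem weightedDerivative (hP : MomentsVanish d K P) (c : ℝ) :
    MomentsVanish d K (weightedDerivative c P) := by
  have hshift : MultipleHermite.weightedDerivative c P
      = MultipleHermite.weightedDerivative d P + (c - d) • P := by
    rw [MultipleHermite.weightedDerivative, MultipleHermite.weightedDerivative, smul_eq_C_mul,
      C_sub]
    ring
  rw [hshift]
  exact (hP.weightedDerivative_self.mono K.le_succ).add (hP.smul _)

theorem eq_zero (hcd : c ≠ d) {p q : ℕ} (hc : MomentsVanish c p P) (hd : MomentsVanish d q P)
    (hdeg : P.natDegree < p + q) : P = 0 := by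
  rw [momentsVanish_iff] at hc hd
  have hcop : IsCoprime ((X - C (c / 2)) ^ p) ((X - C (d / 2)) ^ q) :=
    (isCoprime_X_sub_C_of_isUnit_sub (sub_ne_zero.2 fun h => hcd (by linarith)).isUnit).pow
  have hdvd := hcop.mul_dvd (pow_dvd_gaussTransform_of_eval_eq_zero hc)
    (pow_dvd_gaussTransform_of_eval_eq_zero hd)
  refine gaussTransform_eq_zero_iff.1 (eq_zero_of_dvd_of_natDegree_lt hdvd ?_)
  rw [natDegree_mul (pow_ne_zero _ (X_sub_C_ne_zero _)) (pow_ne_zero _ (X_sub_C_ne_zero _)),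
    natDegree_pow, natDegree_pow, natDegree_X_sub_C, natDegree_X_sub_C, mul_one, mul_one]
  exact (natDegree_gaussTransform_le P).trans_lt hdeg

end MomentsVanish

end MultipleHermite

open MultipleHermite Polynomial in
/-- Raising relation for multiple Hermite polynomials:
`H_{n-1,m}'(x) = -2 H_{n,m}(x) + (2x - c₁) H_{n-1,m}(x)` (stated with `n-1` replaced by `n`). -/
theorem multiple_hermite_raising (c₁ c₂ : ℝ) (hc : c₁ ≠ c₂)
    (H : ℕ → ℕ → Polynomial ℝ)
    (hmonic : ∀ n m, (H n m).Monic)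
    (hdeg : ∀ n m, (H n m).natDegree = n + m)
    (horth1 : ∀ n m, ∀ k < n,
      ∫ x : ℝ, x ^ k * (H n m).eval x * Real.exp (-x ^ 2 + c₁ * x) = 0)
    (horth2 : ∀ n m, ∀ k < m,
      ∫ x : ℝ, x ^ k * (H n m).eval x * Real.exp (-x ^ 2 + c₂ * x) = 0)
    (n m : ℕ) :
    ∀ x : ℝ, ((H n m).derivative).eval x
      = -2 * (H (n + 1) m).eval x + (2 * x - c₁) * (H n m).eval x := by
  have h₁ (n : ℕ) : MomentsVanish c₁ n (H n m) := horth1 n m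
  have h₂ (n : ℕ) : MomentsVanish c₂ m (H n m) := horth2 n m
  have hdegD :
      (H (n + 1) m + (2⁻¹ : ℝ) • weightedDerivative c₁ (H n m)).natDegree < n + 1 + m := by
    have := natDegree_add_smul_weightedDerivative_lt (P := H (n + 1) m) (N := n + m)
      ⟨by rw [hdeg]; ring, hmonic _ _⟩ ⟨hdeg n m, hmonic n m⟩ c₁
    omega
  have hD : H (n + 1) m + (2⁻¹ : ℝ) • weightedDerivative c₁ (H n m) = 0 :=
    (h₁ (n + 1)).add ((h₁ n).weightedDerivative_self.smul _) |>.eq_zero hc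
      ((h₂ (n + 1)).add (((h₂ n).weightedDerivative c₁).smul _)) hdegD
  intro x
  have hx := congrArg (eval x) hD
  simp only [weightedDerivative, eval_add, eval_smul, eval_mul, eval_sub, eval_C, eval_X,
    eval_zero, smul_eq_mul] at hx
  linear_combination 2 * hx
end

section
/- Suppose polynomials H_{n,m} satisfy the ladder relations H_{n,m}' = n H_{n−1,m} + m H_{n,m−1}, H_{n−1,m}' = −2H_{n,m} + (2x−c₁)H_{n−1,m}, and H_{n,m−1}' = −2H_{n,m} + (2x−c₂)H_{n,m−1}. Then H_{n,m} satisfies H_{n,m}''' + (c₁+c₂−4x)H_{n,m}'' + (c₁(c₂−2x)+2(m+n−1−c₂x+2x²))H_{n,m}' + 2(c₁m+c₂n−2(m+n)x)H_{n,m} = 0. -/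
/-!
Write `u = n H_{n-1,m}` and `v = m H_{n,m-1}`, so that `f = H_{n,m}` satisfies `f' = u + v`.
Differentiating twice more and substituting the ladder relations for `u'` and `v'` expresses
`f''` and `f'''` through `f`, `u` and `v`; the third-order equation is then a polynomial
identity in `x, f, u, v`. Conceptually, `D - (2x - c₁)` and `D - (2x - c₂)` commute (their
coefficients differ by a constant), and applying their product to `f' = u + v` gives the ODE.
-/

theorem iteratedDeriv_two_eq_of_hasDerivAt {f f' f'' : ℝ → ℝ}
    (hf : ∀ x, HasDerivAt f (f' x) x) (hf' : ∀ x, HasDerivAt f' (f'' x) x) :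
    iteratedDeriv 2 f = f'' := by
  rw [iteratedDeriv_succ, iteratedDeriv_one, funext fun x => (hf x).deriv,
    funext fun x => (hf' x).deriv]

theorem iteratedDeriv_three_eq_of_hasDerivAt {f f' f'' f''' : ℝ → ℝ}
    (hf : ∀ x, HasDerivAt f (f' x) x) (hf' : ∀ x, HasDerivAt f' (f'' x) x)
    (hf'' : ∀ x, HasDerivAt f'' (f''' x) x) :
    iteratedDeriv 3 f = f''' := by
  rw [iteratedDeriv_succ, iteratedDeriv_two_eq_of_hasDerivAt hf hf',
    funext fun x => (hf'' x).deriv]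

theorem hasDerivAt_ladder_rhs {f u : ℝ → ℝ} {f' u' x : ℝ} (a c : ℝ)
    (hf : HasDerivAt f f' x) (hu : HasDerivAt u u' x) :
    HasDerivAt (fun y => -2 * a * f y + (2 * y - c) * u y)
      (-2 * a * f' + (2 * u x + (2 * x - c) * u')) x := by
  have hlin : HasDerivAt (fun y : ℝ => 2 * y - c) 2 x := by
    simpa using ((hasDerivAt_id x).const_mul 2).sub_const c
  exact (hf.const_mul (-2 * a)).add (hlin.mul hu)

theorem ladder_third_order_ode {f u v : ℝ → ℝ} (a b c₁ c₂ : ℝ)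
    (hf : ∀ x, HasDerivAt f (u x + v x) x)
    (hu : ∀ x, HasDerivAt u (-2 * a * f x + (2 * x - c₁) * u x) x)
    (hv : ∀ x, HasDerivAt v (-2 * b * f x + (2 * x - c₂) * v x) x) (x : ℝ) :
    iteratedDeriv 3 f x + (c₁ + c₂ - 4 * x) * iteratedDeriv 2 f x
      + (c₁ * (c₂ - 2 * x) + 2 * (b + a - 1 - c₂ * x + 2 * x ^ 2)) * deriv f x
      + 2 * (c₁ * b + c₂ * a - 2 * (b + a) * x) * f x = 0 := by
  have hf' : ∀ x, HasDerivAt (fun y => u y + v y)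
      (-2 * a * f x + (2 * x - c₁) * u x + (-2 * b * f x + (2 * x - c₂) * v x)) x :=
    fun x => (hu x).add (hv x)
  have hf'' : ∀ x, HasDerivAt
      (fun y => -2 * a * f y + (2 * y - c₁) * u y + (-2 * b * f y + (2 * y - c₂) * v y))
      (-2 * a * (u x + v x) + (2 * u x + (2 * x - c₁) * (-2 * a * f x + (2 * x - c₁) * u x))
        + (-2 * b * (u x + v x)
          + (2 * v x + (2 * x - c₂) * (-2 * b * f x + (2 * x - c₂) * v x)))) x :=
    fun x => (hasDerivAt_ladder_rhs a c₁ (hf x) (hu x)).add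
      (hasDerivAt_ladder_rhs b c₂ (hf x) (hv x))
  rw [iteratedDeriv_three_eq_of_hasDerivAt hf hf' hf'',
    iteratedDeriv_two_eq_of_hasDerivAt hf hf', (hf x).deriv]
  ring

theorem ladder_implies_third_order_ode_general (c₁ c₂ : ℝ) (n m : ℕ)
    (f g h : ℝ → ℝ)
    (hf : ∀ x, HasDerivAt f ((n : ℝ) * g x + (m : ℝ) * h x) x)
    (hg : ∀ x, HasDerivAt g (-2 * f x + (2 * x - c₁) * g x) x)
    (hh : ∀ x, HasDerivAt h (-2 * f x + (2 * x - c₂) * h x) x) :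
    ∀ x : ℝ,
      iteratedDeriv 3 f x + (c₁ + c₂ - 4 * x) * iteratedDeriv 2 f x
      + (c₁ * (c₂ - 2 * x) + 2 * ((m : ℝ) + n - 1 - c₂ * x + 2 * x ^ 2)) * deriv f x
      + 2 * (c₁ * m + c₂ * n - 2 * ((m : ℝ) + n) * x) * f x = 0 :=
  ladder_third_order_ode (u := fun x => n * g x) (v := fun x => m * h x) n m c₁ c₂ hf
    (fun x => ((hg x).const_mul (n : ℝ)).congr_deriv (by ring))
    (fun x => ((hh x).const_mul (m : ℝ)).congr_deriv (by ring))

/-- The formal derivation of the third-order ODE from the first-order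
ladder system for multiple Hermite polynomials. Here `f = H_{n,m}`, `g = H_{n-1,m}`,
`h = H_{n,m-1}` with `n, m ≥ 1`. -/
theorem ladder_implies_third_order_ode (c₁ c₂ : ℝ) (n m : ℕ)
    (hn : 1 ≤ n) (hm : 1 ≤ m)
    (f g h : ℝ → ℝ)
    (hf : ∀ x, HasDerivAt f ((n : ℝ) * g x + (m : ℝ) * h x) x)
    (hg : ∀ x, HasDerivAt g (-2 * f x + (2 * x - c₁) * g x) x)
    (hh : ∀ x, HasDerivAt h (-2 * f x + (2 * x - c₂) * h x) x) :
    ∀ x : ℝ,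
      iteratedDeriv 3 f x + (c₁ + c₂ - 4 * x) * iteratedDeriv 2 f x
      + (c₁ * (c₂ - 2 * x) + 2 * ((m : ℝ) + n - 1 - c₂ * x + 2 * x ^ 2)) * deriv f x
      + 2 * (c₁ * m + c₂ * n - 2 * ((m : ℝ) + n) * x) * f x = 0 :=
  ladder_implies_third_order_ode_general c₁ c₂ n m f g h hf hg hh
end

section
/- For r = 2 with recurrence relations xP_{n,m} = P_{n+1,m} + c_{n,m}P_{n,m} + a_{n,m}P_{n−1,m} + b_{n,m}P_{n,m−1} and xP_{n,m} = P_{n,m+1} + d_{n,m}P_{n,m} + a_{n,m}P_{n−1,m} + b_{n,m}P_{n,m−1}, the commutativity of the two transfer matrices, W(n+1,m+1 via n+1,m)·W(n+1,m) = W(n+1,m+1 via n,m+1)·W(n,m+1), implies the relation d_{n+1,m} − d_{n,m} = c_{n,m+1} − c_{n,m}. -/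
/-- Commutativity of the two `3×3` transfer matrices for `r = 2`
implies `d_{n+1,m} - d_{n,m} = c_{n,m+1} - c_{n,m}`. -/
theorem transfer_matrix_commutativity (a b c d : ℕ → ℕ → ℝ)
    (n m : ℕ) (hn : 1 ≤ n) (hm : 1 ≤ m)
    (hcomm : ∀ x : ℝ,
      (!![x - d (n + 1) m, -(a (n + 1) m), -(b (n + 1) m);
          1, c n m - d n m, 0;
          1, 0, 0] : Matrix (Fin 3) (Fin 3) ℝ) *
      !![x - c n m, -(a n m), -(b n m);
          1, 0, 0;
          1, 0, d n (m - 1) - c n (m - 1)]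
      =
      (!![x - c n (m + 1), -(a n (m + 1)), -(b n (m + 1));
          1, 0, 0;
          1, 0, d n m - c n m] : Matrix (Fin 3) (Fin 3) ℝ) *
      !![x - d n m, -(a n m), -(b n m);
          1, c (n - 1) m - d (n - 1) m, 0;
          1, 0, 0]) :
    d (n + 1) m - d n m = c n (m + 1) - c n m := by
  have h0 := congrFun (congrFun (hcomm 0) 0) 0
  have h1 := congrFun (congrFun (hcomm 1) 0) 0
  have h2 := congrFun (congrFun (hcomm 2) 0) 0
  simp [Matrix.mul_apply, Fin.sum_univ_three] at h0 h1 h2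
  nlinarith [h0, h1, h2]
end
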